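/- Fix a constant C ≥ 0 and a finite nonempty set V. For every ε > 0 there exists δ > 0 such that: for every probability distribution p on V with 1 - max_{x∈V} p(x) < δ, every probability distribution π on V with D_KL(π ‖ p) ≤ C, and every subset A ⊆ V, one has π(A) - p(A) ≤ ε. Equivalently, as the off-mode mass 1 - max_x p(x) tends to 0, the supremum over KL-budget-C distributions π and over subsets A of the mass shift π(A) - p(A) tends to 0. -/

import Mathlib

/-!
Let `x₀` be a mode of `p` and `δ` a bound on the off-mode mass, so `p x ≤ δ` for `x ≠ x₀`.
Since `a log a ≥ a - 1`, the KL term `μ x log (μ x / p x)` is at least `μ x - 1 - μ x log c`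
whenever `p x ≤ c`; taking `c = δ` off the mode and `c = 1` at it, a KL budget `C` forces
`(1 - μ x₀) log (1/δ) ≤ C + |V| - 1`. So as `δ → 0` both `p` and `μ` concentrate on `x₀`, and a
mass shift `μ(A) - p(A)` is at most `1 - p x₀` if `x₀ ∈ A` and at most `1 - μ x₀` otherwise.
-/

open Real

/-- Termwise KL contribution `p·log(p/q)` with the conventions
`0·log(0/q) = 0`, `0·log(0/0) = 0`, and `b·log(b/0) = +∞` for `b > 0`,
valued in the extended reals `[-∞, ∞]`. -/
noncomputable def klTerm (p q : ℝ) : EReal :=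
  if p = 0 then 0 else if q = 0 then ⊤ else ((p * Real.log (p / q) : ℝ) : EReal)

/-- Binary Kullback–Leibler divergence `d_kl(l ‖ q)` between the two-point
distributions `(l, 1 - l)` and `(q, 1 - q)`. -/
noncomputable def dkl (l q : ℝ) : EReal :=
  klTerm l q + klTerm (1 - l) (1 - q)

/-- Kullback–Leibler divergence `D_KL(μ ‖ p)` between distributions on a finite type. -/
noncomputable def DKL {V : Type*} [Fintype V] (μ p : V → ℝ) : EReal :=
  ∑ x, klTerm (μ x) (p x)

theorem EReal.coe_finset_sum {ι : Type*} (s : Finset ι) (f : ι → ℝ) :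
    ((∑ i ∈ s, f i : ℝ) : EReal) = ∑ i ∈ s, (f i : EReal) :=
  map_sum (⟨⟨Real.toEReal, EReal.coe_zero⟩, EReal.coe_add⟩ : ℝ →+ EReal) f s

theorem sub_one_sub_mul_log_le_klTerm {a b c : ℝ} (ha : 0 ≤ a) (hb : 0 ≤ b) (hbc : b ≤ c) :
    ((a - 1 - a * log c : ℝ) : EReal) ≤ klTerm a b := by
  unfold klTerm
  split_ifs with ha0 hb0
  · simp [ha0]
  · exact le_top
  · have hb_pos : 0 < b := lt_of_le_of_ne hb (Ne.symm hb0)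
    have hlog : log b ≤ log c := log_le_log hb_pos hbc
    rw [EReal.coe_le_coe_iff, log_div ha0 hb0]
    nlinarith [self_sub_one_le_mul_log ha]

theorem mass_mul_neg_log_le_of_DKL_le {V : Type*} [Fintype V] [DecidableEq V]
    {μ p : V → ℝ} (hμ : ∀ x, 0 ≤ μ x) (hμ_sum : ∑ x, μ x = 1)
    (hp : ∀ x, 0 ≤ p x) (hp_le : ∀ x, p x ≤ 1) {S : Finset V} {δ : ℝ} (hS : ∀ x ∈ S, p x ≤ δ)
    {C : ℝ} (hKL : DKL μ p ≤ C) :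
    (∑ x ∈ S, μ x) * -log δ ≤ C + Fintype.card V - 1 := by
  set c : V → ℝ := fun x => if x ∈ S then δ else 1
  have hterm (x : V) : ((μ x - 1 - μ x * log (c x) : ℝ) : EReal) ≤ klTerm (μ x) (p x) := by
    refine sub_one_sub_mul_log_le_klTerm (hμ x) (hp x) ?_
    by_cases hx : x ∈ S
    · simpa [c, hx] using hS x hx
    · simpa [c, hx] using hp_le x
  have hlog_c (x : V) : μ x * log (c x) = if x ∈ S then μ x * log δ else 0 := by
    by_cases hx : x ∈ S <;> simp [c, hx]
  have hsum : ∑ x, (μ x - 1 - μ x * log (c x)) ≤ C := by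
    rw [← EReal.coe_le_coe_iff, EReal.coe_finset_sum]
    exact (Finset.sum_le_sum fun x _ => hterm x).trans hKL
  simp only [Finset.sum_sub_distrib, hlog_c, Finset.sum_ite_mem, Finset.univ_inter,
    ← Finset.sum_mul, hμ_sum, Finset.sum_const, Finset.card_univ, nsmul_eq_mul, mul_one] at hsum
  linarith

theorem le_one_sub_of_ne {V : Type*} [Fintype V] [DecidableEq V] {p : V → ℝ}
    (hp : ∀ x, 0 ≤ p x) (hp_sum : ∑ x, p x = 1) {x y : V} (hxy : x ≠ y) : p x ≤ 1 - p y := by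
  rw [← hp_sum, ← Finset.sum_erase_eq_sub (Finset.mem_univ y)]
  exact Finset.single_le_sum (fun z _ => hp z) (Finset.mem_erase.mpr ⟨hxy, Finset.mem_univ x⟩)

theorem sum_sub_sum_le_of_concentrated {V : Type*} [Fintype V] [DecidableEq V]
    {μ p : V → ℝ} (hμ : ∀ x, 0 ≤ μ x) (hμ_sum : ∑ x, μ x = 1) (hp : ∀ x, 0 ≤ p x)
    {x₀ : V} {ε : ℝ} (hμ₀ : 1 - ε ≤ μ x₀) (hp₀ : 1 - ε ≤ p x₀) (A : Finset V) :
    (∑ x ∈ A, μ x) - (∑ x ∈ A, p x) ≤ ε := by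
  have hμA_le (B : Finset V) : ∑ x ∈ B, μ x ≤ 1 :=
    hμ_sum ▸ Finset.sum_le_sum_of_subset_of_nonneg (Finset.subset_univ B) fun x _ _ => hμ x
  by_cases hx₀ : x₀ ∈ A
  · have := Finset.single_le_sum (fun x _ => hp x) hx₀
    linarith [hμA_le A]
  · have := Finset.sum_insert (f := μ) hx₀
    linarith [hμA_le (insert x₀ A), Finset.sum_nonneg fun x (_ : x ∈ A) => hp x]

/-- vanishing capacity. Fix `C ≥ 0`. For every `ε > 0` there is `δ > 0`
such that for every distribution `p` with off-mode mass `1 - max_x p x < δ`, every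
distribution `μ` with `D_KL(μ‖p) ≤ C`, and every `A ⊆ V`, we have `μ(A) - p(A) ≤ ε`. -/
theorem capacity_vanish {V : Type*} [Fintype V] [Nonempty V] (C : ℝ) (hC : 0 ≤ C) :
    ∀ ε > (0 : ℝ), ∃ δ > (0 : ℝ),
      ∀ p : V → ℝ, (∀ x, 0 ≤ p x) → (∀ x, p x ≤ 1) → (∑ x, p x = 1) →
        1 - Finset.univ.sup' Finset.univ_nonempty p < δ →
      ∀ μ : V → ℝ, (∀ x, 0 ≤ μ x) → (∀ x, μ x ≤ 1) → (∑ x, μ x = 1) →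
        DKL μ p ≤ (C : EReal) →
      ∀ A : Finset V, (∑ x ∈ A, μ x) - (∑ x ∈ A, p x) ≤ ε := by
  classical
  intro ε hε
  set n : ℝ := (Fintype.card V : ℝ)
  have hn : 1 ≤ n := Nat.one_le_cast.mpr Fintype.card_pos
  set δ := min ε (exp (-((C + n) / ε)))
  have hδ : 0 < δ := lt_min hε (exp_pos _)
  have hL : (C + n) / ε ≤ -log δ := by
    rw [le_neg, ← log_exp (-_)]
    exact log_le_log hδ (min_le_right _ _)
  refine ⟨δ, hδ, fun p hp hp_le hp_sum hmode μ hμ _ hμ_sum hKL A => ?_⟩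
  obtain ⟨x₀, -, hx₀⟩ := Finset.exists_mem_eq_sup' Finset.univ_nonempty p
  rw [hx₀] at hmode
  have hS : ∀ x ∈ Finset.univ.erase x₀, p x ≤ δ := fun x hx =>
    (le_one_sub_of_ne hp hp_sum (Finset.ne_of_mem_erase hx)).trans hmode.le
  have hmass := mass_mul_neg_log_le_of_DKL_le hμ hμ_sum hp hp_le hS hKL
  rw [Finset.sum_erase_eq_sub (Finset.mem_univ x₀), hμ_sum] at hmass
  have hμ₀ : 1 - ε ≤ μ x₀ := by
    have hCn : C + n ≤ ε * -log δ := by rwa [div_le_iff₀' hε] at hL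
    have hlog_pos : 0 < -log δ := lt_of_lt_of_le (by positivity) hL
    nlinarith
  exact sum_sub_sum_le_of_concentrated hμ hμ_sum hp hμ₀ (by linarith [min_le_left ε (exp (-((C + n) / ε)))]) A
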